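/- Let A be an n×n s-quasiseparable matrix over a field K with n = N·s. Then the strictly lower triangular part of A, partitioned into s×s blocks, admits a strictly-lower-triangular SSS representation: there exist s×s matrices P_i (2 ≤ i ≤ N), Q_j (1 ≤ j ≤ N-1), R_k (2 ≤ k ≤ N-1) such that A_{i,j} = P_i R_{i-1}···R_{j+1} Q_j for all i > j. -/
import Mathlib

/-- An `n×n` matrix `A` over a field `K` is `s`-quasiseparable if for all `k`,
`rank(A[1..k, k+1..n]) ≤ s` and `rank(A[k+1..n, 1..k]) ≤ s`. -/
def IsQuasiseparable {K : Type*} [Field K] {n : ℕ} (s : ℕ)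
    (A : Matrix (Fin n) (Fin n) K) : Prop :=
  ∀ k : ℕ, k ≤ n →
    (A.submatrix (fun i : {i : Fin n // (i : ℕ) < k} => i.1)
        (fun j : {j : Fin n // k ≤ (j : ℕ)} => j.1)).rank ≤ s ∧
    (A.submatrix (fun i : {i : Fin n // k ≤ (i : ℕ)} => i.1)
        (fun j : {j : Fin n // (j : ℕ) < k} => j.1)).rank ≤ s

/-- The `s×s` block of `A` at (0-based) block position `(i, j)` (junk `0` out of range). -/
def blk {K : Type*} [Field K] {n : ℕ} (s : ℕ) (A : Matrix (Fin n) (Fin n) K)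
    (i j : ℕ) : Matrix (Fin s) (Fin s) K :=
  fun a b =>
    if h : i * s + (a : ℕ) < n ∧ j * s + (b : ℕ) < n then
      A ⟨i * s + (a : ℕ), h.1⟩ ⟨j * s + (b : ℕ), h.2⟩
    else 0

/-- Descending chain product `R_{j+m} * R_{j+m-1} * ⋯ * R_{j+1}` (with `m` factors). -/
def chainDesc {K : Type*} [Field K] {m' : Type*} [Fintype m'] [DecidableEq m']
    (R : ℕ → Matrix m' m' K) (j : ℕ) : ℕ → Matrix m' m' K
  | 0 => 1
  | m + 1 => R (j + m + 1) * chainDesc R j m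

section AuxSSS

open Matrix

variable {K : Type*} [Field K]

/-- Solve `X = Y * R` when the column space of `X` is contained in that of `Y`. -/
lemma exists_right_factor' {m p q : Type*} [Fintype p] [Fintype q] [DecidableEq q]
    (X : Matrix m q K) (Y : Matrix m p K)
    (h : LinearMap.range X.mulVecLin ≤ LinearMap.range Y.mulVecLin) :
    ∃ R : Matrix p q K, X = Y * R := by
  have hc : ∀ j : q, ∃ r : p → K, Y *ᵥ r = fun i => X i j := by
    intro j
    have hx : (fun i => X i j) ∈ LinearMap.range X.mulVecLin :=
      ⟨Pi.single j 1, by ext i; simp [Matrix.mulVecLin_apply, Matrix.mulVec_single]⟩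
    obtain ⟨r, hr⟩ := h hx
    exact ⟨r, hr⟩
  choose r hr using hc
  refine ⟨Matrix.of fun a j => r j a, ?_⟩
  ext i j
  have := congrFun (hr j) i
  simp only [Matrix.mulVec, dotProduct] at this
  simp [Matrix.mul_apply, ← this]

/-- Rank factorization with control on ranges. -/
lemma exists_rank_factorization' {m p : Type*} [Fintype m] [Fintype p] [DecidableEq m]
    [DecidableEq p] {s : ℕ} (M : Matrix m p K) (h : M.rank ≤ s) :
    ∃ (B : Matrix m (Fin s) K) (C : Matrix (Fin s) p K),
      M = B * C ∧ LinearMap.range B.mulVecLin = LinearMap.range M.mulVecLin := by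
  classical
  set V : Submodule K (m → K) := LinearMap.range M.mulVecLin with hV
  have hfin : Module.finrank K V ≤ s := h
  let b := Module.finBasis K V
  let π : (Fin s → K) →ₗ[K] (Fin (Module.finrank K V) → K) :=
    LinearMap.funLeft K K (Fin.castLE hfin)
  have hπ : Function.Surjective π :=
    LinearMap.funLeft_surjective_of_injective K K _ (Fin.castLE_injective hfin)
  let g : (Fin s → K) →ₗ[K] V := (b.equivFun.symm : (Fin _ → K) →ₗ[K] V) ∘ₗ π
  have hg : Function.Surjective g := b.equivFun.symm.surjective.comp hπ
  obtain ⟨gs, hgs⟩ := g.exists_rightInverse_of_surjective (LinearMap.range_eq_top.2 hg)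
  let M' : (p → K) →ₗ[K] V := M.mulVecLin.rangeRestrict
  let B : Matrix m (Fin s) K := LinearMap.toMatrix' (V.subtype ∘ₗ g)
  let C : Matrix (Fin s) p K := LinearMap.toMatrix' (gs ∘ₗ M')
  have hBm : B.mulVecLin = V.subtype ∘ₗ g := Matrix.toLin'_toMatrix' _
  have hCm : C.mulVecLin = gs ∘ₗ M' := Matrix.toLin'_toMatrix' _
  have hsub : V.subtype ∘ₗ M' = M.mulVecLin := M.mulVecLin.subtype_comp_codRestrict _ _
  refine ⟨B, C, ?_, ?_⟩
  · apply Matrix.toLin'.injective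
    rw [Matrix.toLin'_apply', Matrix.toLin'_apply', Matrix.mulVecLin_mul, hBm, hCm]
    refine LinearMap.ext fun x => ?_
    simp only [LinearMap.comp_apply]
    have h1 : g (gs (M' x)) = M' x := congrFun (congrArg DFunLike.coe hgs) (M' x)
    rw [h1]
    exact (congrFun (congrArg DFunLike.coe hsub) x).symm
  · rw [hBm, LinearMap.range_comp, LinearMap.range_eq_top.2 hg, Submodule.map_top,
      Submodule.range_subtype]

/-- Diagonal 0/1 mask keeping rows/cols with index `≥ t`. -/
def maskGe (K : Type*) [Field K] (n t : ℕ) : Matrix (Fin n) (Fin n) K :=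
  Matrix.diagonal fun i => if t ≤ (i : ℕ) then 1 else 0

/-- Diagonal 0/1 mask keeping rows/cols with index `< t`. -/
def maskLt (K : Type*) [Field K] (n t : ℕ) : Matrix (Fin n) (Fin n) K :=
  Matrix.diagonal fun i => if (i : ℕ) < t then 1 else 0

lemma maskGe_mul_maskGe {n t₁ t₂ : ℕ} (h : t₂ ≤ t₁) :
    maskGe K n t₁ * maskGe K n t₂ = maskGe K n t₁ := by
  unfold maskGe
  rw [Matrix.diagonal_mul_diagonal]
  ext i j
  rcases eq_or_ne i j with rfl | hij
  · simp only [Matrix.diagonal_apply_eq]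
    by_cases h1 : t₁ ≤ (i : ℕ)
    · have h2 : t₂ ≤ (i : ℕ) := le_trans h h1
      simp [h1, h2]
    · simp [h1]
  · simp [Matrix.diagonal_apply_ne _ hij]

lemma maskLt_mul_maskLt {n t₁ t₂ : ℕ} (h : t₂ ≤ t₁) :
    maskLt K n t₁ * maskLt K n t₂ = maskLt K n t₂ := by
  unfold maskLt
  rw [Matrix.diagonal_mul_diagonal]
  ext i j
  rcases eq_or_ne i j with rfl | hij
  · simp only [Matrix.diagonal_apply_eq]
    by_cases h2 : (i : ℕ) < t₂
    · have h1 : (i : ℕ) < t₁ := lt_of_lt_of_le h2 h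
      simp [h1, h2]
    · simp [h2]
  · simp [Matrix.diagonal_apply_ne _ hij]

lemma mask_mul_entry {n t : ℕ} (A : Matrix (Fin n) (Fin n) K) (i j : Fin n) :
    (maskGe K n t * A * maskLt K n t) i j =
      if t ≤ (i : ℕ) ∧ (j : ℕ) < t then A i j else 0 := by
  simp only [maskGe, maskLt, Matrix.mul_diagonal, Matrix.diagonal_mul]
  by_cases h1 : t ≤ (i : ℕ) <;> by_cases h2 : (j : ℕ) < t <;> simp [h1, h2]

lemma rank_mask_le {n t s : ℕ} (A : Matrix (Fin n) (Fin n) K)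
    (h : (A.submatrix (fun i : {i : Fin n // t ≤ (i : ℕ)} => i.1)
        (fun j : {j : Fin n // (j : ℕ) < t} => j.1)).rank ≤ s) :
    (maskGe K n t * A * maskLt K n t).rank ≤ s := by
  classical
  set S := A.submatrix (fun i : {i : Fin n // t ≤ (i : ℕ)} => i.1)
      (fun j : {j : Fin n // (j : ℕ) < t} => j.1) with hS
  set Er : Matrix (Fin n) {i : Fin n // t ≤ (i : ℕ)} K :=
    Matrix.of fun i i' => if i = i'.1 then 1 else 0 with hEr
  set Ec : Matrix {j : Fin n // (j : ℕ) < t} (Fin n) K :=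
    Matrix.of fun j' j => if j'.1 = j then 1 else 0 with hEc
  have hErS : ∀ (X : Matrix {i : Fin n // t ≤ (i : ℕ)} {j : Fin n // (j : ℕ) < t} K)
      (i : Fin n) (c : {j : Fin n // (j : ℕ) < t}),
      (Er * X) i c = if h : t ≤ (i : ℕ) then X ⟨i, h⟩ c else 0 := by
    intro X i c
    rw [Matrix.mul_apply]
    by_cases hi : t ≤ (i : ℕ)
    · rw [dif_pos hi, Finset.sum_eq_single (⟨i, hi⟩ : {i : Fin n // t ≤ (i : ℕ)})]
      · simp [hEr]
      · intro b _ hb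
        have : i ≠ b.1 := fun e => hb (Subtype.ext e.symm)
        simp [hEr, this]
      · intro hmem; exact absurd (Finset.mem_univ _) hmem
    · rw [dif_neg hi]
      apply Finset.sum_eq_zero
      intro b _
      have : i ≠ b.1 := fun e => hi (e ▸ b.2)
      simp [hEr, this]
  have hSEc : ∀ (X : Matrix (Fin n) {j : Fin n // (j : ℕ) < t} K) (r : Fin n) (j : Fin n),
      (X * Ec) r j = if h : (j : ℕ) < t then X r ⟨j, h⟩ else 0 := by
    intro X r j
    rw [Matrix.mul_apply]
    by_cases hj : (j : ℕ) < t
    · rw [dif_pos hj, Finset.sum_eq_single (⟨j, hj⟩ : {j : Fin n // (j : ℕ) < t})]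
      · simp [hEc]
      · intro b _ hb
        have : b.1 ≠ j := fun e => hb (Subtype.ext e)
        simp [hEc, this]
      · intro hmem; exact absurd (Finset.mem_univ _) hmem
    · rw [dif_neg hj]
      apply Finset.sum_eq_zero
      intro b _
      have : b.1 ≠ j := fun e => hj (e ▸ b.2)
      simp [hEc, this]
  have hfact : maskGe K n t * A * maskLt K n t = Er * S * Ec := by
    ext i j
    rw [mask_mul_entry, hSEc (Er * S) i j]
    by_cases hj : (j : ℕ) < t
    · rw [dif_pos hj, hErS S i ⟨j, hj⟩]
      by_cases hi : t ≤ (i : ℕ)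
      · simp [hi, hj, hS]
      · simp [hi, hj]
    · simp [hj]
  rw [hfact]
  exact le_trans (Matrix.rank_mul_le_left _ _)
    (le_trans (Matrix.rank_mul_le_right _ _) h)

/-- Row block `i` (rows `i*s..i*s+s-1`) of an `n × s` matrix, junk 0 out of range. -/
def rowBlk {n : ℕ} (s : ℕ) (M : Matrix (Fin n) (Fin s) K) (i : ℕ) :
    Matrix (Fin s) (Fin s) K :=
  Matrix.of fun a b => if h : i * s + (a : ℕ) < n then M ⟨i * s + (a : ℕ), h⟩ b else 0

/-- Column block `j` of an `s × n` matrix, junk 0 out of range. -/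
def colBlk {n : ℕ} (s : ℕ) (C : Matrix (Fin s) (Fin n) K) (j : ℕ) :
    Matrix (Fin s) (Fin s) K :=
  Matrix.of fun a b => if h : j * s + (b : ℕ) < n then C a ⟨j * s + (b : ℕ), h⟩ else 0

lemma range_mulVecLin_mul {l m n : Type*} [Fintype m] [Fintype n]
    (X : Matrix l m K) (Y : Matrix m n K) :
    LinearMap.range (X * Y).mulVecLin
      = Submodule.map X.mulVecLin (LinearMap.range Y.mulVecLin) := by
  rw [Matrix.mulVecLin_mul, LinearMap.range_comp]

lemma rowBlk_mul {n s : ℕ} (M : Matrix (Fin n) (Fin s) K) (R : Matrix (Fin s) (Fin s) K)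
    (i : ℕ) : rowBlk s (M * R) i = rowBlk s M i * R := by
  ext a b
  by_cases h : i * s + (a : ℕ) < n
  · simp [rowBlk, h, Matrix.mul_apply]
  · simp [rowBlk, h, Matrix.mul_apply]

lemma rowBlk_maskGe {n s t : ℕ} (M : Matrix (Fin n) (Fin s) K) (i : ℕ)
    (ht : t ≤ i * s) : rowBlk s (maskGe K n t * M) i = rowBlk s M i := by
  unfold maskGe
  ext a b
  by_cases h : i * s + (a : ℕ) < n
  · have h2 : t ≤ i * s + (a : ℕ) := le_trans ht (Nat.le_add_right _ _)
    simp [rowBlk, h, Matrix.diagonal_mul, h2]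
  · simp [rowBlk, h]

lemma chainDesc_mul_right {m' : Type*} [Fintype m'] [DecidableEq m']
    (R : ℕ → Matrix m' m' K) (j d : ℕ) :
    chainDesc R (j + 1) d * R (j + 1) = chainDesc R j (d + 1) := by
  induction d with
  | zero => simp [chainDesc]
  | succ d ih =>
      have : j + 1 + d + 1 = j + (d + 1) + 1 := by omega
      rw [chainDesc, mul_assoc, ih, this, ← chainDesc]

end AuxSSS

/-- The strictly lower triangular part of an `s`-quasiseparable `n×n` matrix (`n = N·s`)
admits a strictly-lower-triangular SSS representation: there exist `s×s` matrices
`P_i, Q_j, R_k` such that `A_{i,j} = P_i R_{i-1}⋯R_{j+1} Q_j` for all block indices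
`i > j` (0-based). -/
theorem exists_lower_sss_generator {K : Type*} [Field K] (N s : ℕ)
    (A : Matrix (Fin (N * s)) (Fin (N * s)) K)
    (hA : IsQuasiseparable s A) :
    ∃ P Q R : ℕ → Matrix (Fin s) (Fin s) K,
      ∀ i j : ℕ, i < N → j < i →
        blk s A i j = P i * chainDesc R j (i - j - 1) * Q j := by
  classical
  have hHrank : ∀ k : ℕ,
      (maskGe K (N * s) (k * s) * A * maskLt K (N * s) (k * s)).rank ≤ s := by
    intro k
    by_cases hk : k * s ≤ N * s
    · exact rank_mask_le A (hA (k * s) hk).2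
    · have hz : maskGe K (N * s) (k * s) = 0 := by
        unfold maskGe
        ext i j
        rcases eq_or_ne i j with rfl | hij
        · have hni : ¬ (k * s ≤ (i : ℕ)) := by
            push_neg at hk ⊢
            exact lt_trans i.2 hk
          simp [Matrix.diagonal_apply_eq, hni]
        · simp [Matrix.diagonal_apply_ne _ hij]
      rw [hz, Matrix.zero_mul, Matrix.zero_mul]
      simp
  choose B C hBC hBrange using fun k =>
    exists_rank_factorization' (maskGe K (N * s) (k * s) * A * maskLt K (N * s) (k * s))
      (hHrank k)
  have hRex : ∀ k : ℕ, ∃ Rk : Matrix (Fin s) (Fin s) K,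
      maskGe K (N * s) ((k + 1) * s) * B k = B (k + 1) * Rk := by
    intro k
    apply exists_right_factor'
    have hle : k * s ≤ (k + 1) * s := Nat.mul_le_mul_right s (Nat.le_succ k)
    have e2a : maskGe K (N * s) ((k + 1) * s) *
        (maskGe K (N * s) (k * s) * A * maskLt K (N * s) (k * s))
        = maskGe K (N * s) ((k + 1) * s) * A * maskLt K (N * s) (k * s) := by
      simp only [← Matrix.mul_assoc]
      rw [maskGe_mul_maskGe hle]
    have e2b : (maskGe K (N * s) ((k + 1) * s) * A * maskLt K (N * s) ((k + 1) * s)) *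
        maskLt K (N * s) (k * s)
        = maskGe K (N * s) ((k + 1) * s) * A * maskLt K (N * s) (k * s) := by
      rw [Matrix.mul_assoc, maskLt_mul_maskLt hle]
    calc LinearMap.range (maskGe K (N * s) ((k + 1) * s) * B k).mulVecLin
        = Submodule.map (maskGe K (N * s) ((k + 1) * s)).mulVecLin
            (LinearMap.range (B k).mulVecLin) := range_mulVecLin_mul _ _
      _ = Submodule.map (maskGe K (N * s) ((k + 1) * s)).mulVecLin
            (LinearMap.range (maskGe K (N * s) (k * s) * A *
              maskLt K (N * s) (k * s)).mulVecLin) := by rw [hBrange k]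
      _ = LinearMap.range (maskGe K (N * s) ((k + 1) * s) *
            (maskGe K (N * s) (k * s) * A * maskLt K (N * s) (k * s))).mulVecLin :=
          (range_mulVecLin_mul _ _).symm
      _ = LinearMap.range ((maskGe K (N * s) ((k + 1) * s) * A *
            maskLt K (N * s) ((k + 1) * s)) * maskLt K (N * s) (k * s)).mulVecLin := by
          rw [e2a, e2b]
      _ ≤ LinearMap.range (maskGe K (N * s) ((k + 1) * s) * A *
            maskLt K (N * s) ((k + 1) * s)).mulVecLin := by
          rw [range_mulVecLin_mul]
          exact LinearMap.map_le_range
      _ = LinearMap.range (B (k + 1)).mulVecLin := (hBrange (k + 1)).symm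
  choose R hR using hRex
  have key : ∀ d j : ℕ, rowBlk s (B (j + 1)) (j + 1 + d)
      = rowBlk s (B (j + 1 + d)) (j + 1 + d) * chainDesc R j d := by
    intro d
    induction d with
    | zero => intro j; simp [chainDesc]
    | succ d ih =>
        intro j
        have h1 : (j + 1 + 1) * s ≤ (j + 1 + (d + 1)) * s :=
          Nat.mul_le_mul_right s (by omega)
        have e1 : rowBlk s (B (j + 1)) (j + 1 + (d + 1))
            = rowBlk s (maskGe K (N * s) ((j + 1 + 1) * s) * B (j + 1)) (j + 1 + (d + 1)) :=
          (rowBlk_maskGe _ _ h1).symm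
        rw [e1, hR (j + 1), rowBlk_mul,
          show j + 1 + (d + 1) = j + 1 + 1 + d from by omega, ih (j + 1),
          Matrix.mul_assoc, chainDesc_mul_right]
  refine ⟨fun i => rowBlk s (B i) i, fun j => colBlk s (C (j + 1)) j, R, ?_⟩
  intro i j hi hij
  show blk s A i j = rowBlk s (B i) i * chainDesc R j (i - j - 1) * colBlk s (C (j + 1)) j
  have hkey := key (i - j - 1) j
  rw [show j + 1 + (i - j - 1) = i from by omega] at hkey
  rw [← hkey]
  ext a b
  have has := a.2
  have hbs := b.2
  have hia : i * s + (a : ℕ) < N * s := by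
    have h1 : (i + 1) * s ≤ N * s := Nat.mul_le_mul_right s hi
    have h2 : (i + 1) * s = i * s + s := by ring
    omega
  have hjb : j * s + (b : ℕ) < N * s := by
    have h1 : (j + 1) * s ≤ N * s := Nat.mul_le_mul_right s (by omega)
    have h2 : (j + 1) * s = j * s + s := by ring
    omega
  have hgei : (j + 1) * s ≤ i * s + (a : ℕ) :=
    le_trans (Nat.mul_le_mul_right s (by omega)) (Nat.le_add_right _ _)
  have hltj : j * s + (b : ℕ) < (j + 1) * s := by
    have h2 : (j + 1) * s = j * s + s := by ring
    omega
  rw [Matrix.mul_apply]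
  simp only [rowBlk, colBlk, Matrix.of_apply, hia, hjb, dif_pos]
  have hBCe : (maskGe K (N * s) ((j + 1) * s) * A * maskLt K (N * s) ((j + 1) * s))
      ⟨i * s + (a : ℕ), hia⟩ ⟨j * s + (b : ℕ), hjb⟩
      = ∑ c, B (j + 1) ⟨i * s + (a : ℕ), hia⟩ c * C (j + 1) c ⟨j * s + (b : ℕ), hjb⟩ := by
    rw [← Matrix.mul_apply, ← hBC (j + 1)]
  rw [← hBCe, mask_mul_entry]
  simp [blk, hia, hjb, hgei, hltj]
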